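/- If G is a graph with no isolated vertex and H is a nontrivial graph with γ^s_{(1,0)}(H)=γ(H)=2, then γ^s_{(1,1,0)}(G) ≤ γ^s_{(1,0)}(G∘H) ≤ γ_{(2,2,0)}(G). -/

import Mathlib

namespace SecureW

open Finset

/-- Lexicographic product of simple graphs. -/
def lexProd {α β : Type*} (G : SimpleGraph α) (H : SimpleGraph β) :
    SimpleGraph (α × β) where
  Adj p q := G.Adj p.1 q.1 ∨ (p.1 = q.1 ∧ H.Adj p.2 q.2)
  symm := by
    constructor
    rintro p q (h | ⟨h1, h2⟩)
    · exact Or.inl h.symm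
    · exact Or.inr ⟨h1.symm, h2.symm⟩
  loopless := by
    constructor
    rintro p (h | ⟨_, h⟩)
    · exact G.loopless.irrefl _ h
    · exact H.loopless.irrefl _ h

open scoped Classical in
/-- Sum of `f` over the open neighbourhood of `v`. -/
noncomputable def nbrSum {V : Type*} [Fintype V] (G : SimpleGraph V) (f : V → ℕ) (v : V) : ℕ :=
  ∑ u ∈ Finset.univ.filter (fun u => G.Adj v u), f u

/-- `f` is a `w`-dominating function, where `w` is given as a list `(w_0, …, w_l)`. -/
def IsWDom {V : Type*} [Fintype V] (G : SimpleGraph V) (ws : List ℕ) (f : V → ℕ) : Prop :=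
  (∀ v, f v < ws.length) ∧ ∀ v, ws.getD (f v) 0 ≤ nbrSum G f v

/-- The function obtained from `f` by moving one unit of weight from `u` to `v`. -/
def move {V : Type*} [DecidableEq V] (f : V → ℕ) (u v : V) : V → ℕ :=
  fun x => if x = v then 1 else if x = u then f u - 1 else f x

open scoped Classical in
/-- `f` is a secure `w`-dominating function. -/
def IsSecureWDom {V : Type*} [Fintype V] (G : SimpleGraph V) (ws : List ℕ) (f : V → ℕ) : Prop :=
  IsWDom G ws f ∧ ∀ v, f v = 0 → ∃ u, G.Adj v u ∧ 0 < f u ∧ IsWDom G ws (move f u v)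

/-- The weight of a function. -/
noncomputable def weight {V : Type*} [Fintype V] (f : V → ℕ) : ℕ := ∑ v, f v

/-- The `w`-domination number. -/
noncomputable def wDomNum {V : Type*} [Fintype V] (G : SimpleGraph V) (ws : List ℕ) : ℕ :=
  sInf {k | ∃ f, IsWDom G ws f ∧ weight f = k}

/-- The secure `w`-domination number. -/
noncomputable def secWDomNum {V : Type*} [Fintype V] (G : SimpleGraph V) (ws : List ℕ) : ℕ :=
  sInf {k | ∃ f, IsSecureWDom G ws f ∧ weight f = k}

/-- The (ordinary) domination number, as `γ_{(1,0)}`. -/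
noncomputable def domNum {V : Type*} [Fintype V] (G : SimpleGraph V) : ℕ :=
  wDomNum G [1, 0]

/-- `G` has no isolated vertex. -/
def NoIsolated {V : Type*} (G : SimpleGraph V) : Prop := ∀ v, ∃ u, G.Adj v u

end SecureW


namespace SecureW

open Finset

lemma getD10 : ∀ n, ([1,0]:List ℕ).getD n 0 = if n = 0 then 1 else 0
  | 0 => rfl | 1 => rfl | (n+2) => by simp [List.getD]
lemma getD110 : ∀ n, ([1,1,0]:List ℕ).getD n 0 = if n ≤ 1 then 1 else 0
  | 0 => rfl | 1 => rfl | 2 => rfl | (n+3) => by simp [List.getD]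
lemma getD220 : ∀ n, ([2,2,0]:List ℕ).getD n 0 = if n ≤ 1 then 2 else 0
  | 0 => rfl | 1 => rfl | 2 => rfl | (n+3) => by simp [List.getD]

variable {V : Type*} [Fintype V] {G : SimpleGraph V}

lemma le_nbrSum {f : V → ℕ} {v u : V} (h : G.Adj v u) : f u ≤ nbrSum G f v := by
  classical
  unfold nbrSum
  exact Finset.single_le_sum (fun i _ => Nat.zero_le _) (by simp [h])

lemma one_le_nbrSum {f : V → ℕ} {v : V} (h : ∃ u, G.Adj v u ∧ 0 < f u) :
    1 ≤ nbrSum G f v := by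
  obtain ⟨u, hu, hf⟩ := h
  exact le_trans hf (le_nbrSum hu)

lemma exists_of_nbrSum_pos {f : V → ℕ} {v : V} (h : 0 < nbrSum G f v) :
    ∃ u, G.Adj v u ∧ 0 < f u := by
  by_contra hc
  push_neg at hc
  have : nbrSum G f v = 0 := by
    unfold nbrSum
    exact Finset.sum_eq_zero fun u hu => by
      simp only [Finset.mem_filter] at hu
      exact Nat.le_zero.mp (hc u hu.2)
  omega

lemma nbrSum_eq_zero {f : V → ℕ} {v : V} (hc : ∀ u, G.Adj v u → f u = 0) :
    nbrSum G f v = 0 := by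
  unfold nbrSum
  exact Finset.sum_eq_zero fun u hu => by
    simp only [Finset.mem_filter] at hu
    exact hc u hu.2

lemma nbrSum_concentrate {f : V → ℕ} {v : V} (u0 : V)
    (h : ∀ u, G.Adj v u → u ≠ u0 → f u = 0) (h2 : 2 ≤ nbrSum G f v) :
    G.Adj v u0 ∧ 2 ≤ f u0 := by
  classical
  by_cases adj : G.Adj v u0
  · refine ⟨adj, le_trans h2 ?_⟩
    unfold nbrSum
    have heq : ∀ u ∈ Finset.univ.filter (fun u => G.Adj v u),
        f u = if u = u0 then f u0 else 0 := by
      intro u hu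
      simp only [Finset.mem_filter] at hu
      by_cases h' : u = u0
      · simp [h']
      · simp [h', h u hu.2 h']
    rw [Finset.sum_congr rfl heq, Finset.sum_ite_eq' _ u0]
    split <;> simp
  · have : nbrSum G f v = 0 := nbrSum_eq_zero fun u hu => by
      by_cases h' : u = u0
      · exact absurd (h' ▸ hu) adj
      · exact h u hu h'
    omega

/-- Characterization of `IsWDom G [1,0]`. -/
lemma isWDom10_iff (f : V → ℕ) :
    IsWDom G [1, 0] f ↔ (∀ v, f v ≤ 1) ∧ (∀ v, f v = 0 → ∃ u, G.Adj v u ∧ 0 < f u) := by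
  constructor
  · rintro ⟨hlt, hdom⟩
    refine ⟨fun v => by have := hlt v; simpa using Nat.lt_succ_iff.mp (by simpa using this),
      fun v hv => ?_⟩
    have := hdom v
    rw [hv] at this
    exact exists_of_nbrSum_pos (lt_of_lt_of_le one_pos (by simpa using this))
  · rintro ⟨hle, hdom⟩
    refine ⟨fun v => by have := hle v; simp; omega, fun v => ?_⟩
    rw [getD10]
    split
    · exact one_le_nbrSum (hdom v (by assumption))
    · exact Nat.zero_le _

/-- Intro rule for `IsWDom G [1,1,0]`. -/
lemma isWDom110_intro (f : V → ℕ) (h1 : ∀ v, f v ≤ 2)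
    (h2 : ∀ v, f v ≤ 1 → ∃ u, G.Adj v u ∧ 0 < f u) : IsWDom G [1, 1, 0] f := by
  refine ⟨fun v => by have := h1 v; simp; omega, fun v => ?_⟩
  rw [getD110]
  split
  · exact one_le_nbrSum (h2 v (by assumption))
  · exact Nat.zero_le _

lemma move_le {f : V → ℕ} (hf : ∀ p, f p ≤ 1) (u v : V) [DecidableEq V] :
    ∀ p, move f u v p ≤ 1 := by
  intro p
  unfold move
  have := hf u
  split
  · exact le_refl 1
  · split
    · omega
    · exact hf p

end SecureW


namespace SecureW

open Finset

lemma move_eq {V : Type*} (i1 i2 : DecidableEq V) (f : V → ℕ) (u v : V) :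
    @move V i1 f u v = @move V i2 f u v := by
  funext x
  unfold move
  by_cases h1 : x = v
  · rw [if_pos h1, if_pos h1]
  · rw [if_neg h1, if_neg h1]
    by_cases h2 : x = u
    · rw [if_pos h2, if_pos h2]
    · rw [if_neg h2, if_neg h2]

lemma isWDom_move_irrel {V : Type*} [Fintype V] {G : SimpleGraph V} {ws : List ℕ}
    {f : V → ℕ} {u v : V} {i1 i2 : DecidableEq V}
    (h : IsWDom G ws (@move V i1 f u v)) : IsWDom G ws (@move V i2 f u v) := by
  rwa [move_eq i1 i2] at h

section Product

variable {α β : Type*} [Fintype α] [Fintype β]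

lemma no_universal {β : Type*} [Fintype β] {H : SimpleGraph β} (h2 : domNum H = 2) (b0 : β)
    (h : ∀ b, b ≠ b0 → H.Adj b b0) : False := by
  classical
  set fH : β → ℕ := fun b => if b = b0 then 1 else 0 with hfH
  have hdom : IsWDom H [1, 0] fH := by
    rw [isWDom10_iff]
    refine ⟨fun v => by simp [hfH]; split <;> omega, fun b hb => ?_⟩
    have hb' : b ≠ b0 := by
      intro he
      simp [hfH, he] at hb
    exact ⟨b0, h b hb', by simp [hfH]⟩
  have hw : weight fH = 1 := by
    unfold weight
    simp [hfH]
  have : domNum H ≤ 1 := Nat.sInf_le ⟨fH, hdom, hw⟩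
  omega

/-- Total weight of `f` in the copy of `H` above `v`. -/
def copyW (f : α × β → ℕ) (v : α) : ℕ := ∑ b, f (v, b)

/-- `copyW` capped at 2. -/
noncomputable def cap (f : α × β → ℕ) (v : α) : ℕ := min 2 (copyW f v)

lemma apply_le_copyW (f : α × β → ℕ) (v : α) (b : β) : f (v, b) ≤ copyW f v :=
  Finset.single_le_sum (f := fun c => f (v, c)) (fun i _ => Nat.zero_le _) (Finset.mem_univ b)

lemma weight_eq_sum_copyW (f : α × β → ℕ) : weight f = ∑ v, copyW f v := by
  unfold weight copyW
  rw [Fintype.sum_prod_type]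

lemma exists_pos_of_copyW_pos {f : α × β → ℕ} {v : α} (h : 0 < copyW f v) :
    ∃ b, 0 < f (v, b) := by
  by_contra hc
  push_neg at hc
  have : copyW f v = 0 := Finset.sum_eq_zero fun b _ => Nat.le_zero.mp (hc b)
  omega

variable {G : SimpleGraph α} {H : SimpleGraph β}

lemma key_neighbor (hH : Nontrivial β) (h2 : domNum H = 2)
    {f : α × β → ℕ} (hf : IsWDom (lexProd G H) [1, 0] f) {x : α} (hx : copyW f x ≤ 1) :
    ∃ y, G.Adj x y ∧ 0 < copyW f y := by
  obtain ⟨hle, hdom⟩ := (isWDom10_iff f).mp hf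
  by_contra hc
  push_neg at hc
  rcases Nat.le_one_iff_eq_zero_or_eq_one.mp hx with h0 | h1
  · -- copy x is empty
    have hb : Nonempty β := hH.to_nonempty
    obtain ⟨b⟩ := hb
    have hz : f (x, b) = 0 := by have := apply_le_copyW f x b; omega
    obtain ⟨⟨y, c⟩, hadj, hpos⟩ := hdom (x, b) hz
    rcases hadj with hg | ⟨hxy, _⟩
    · have := hc y hg
      have := apply_le_copyW f y c
      omega
    · have : f (x, c) ≤ copyW f x := apply_le_copyW f x c
      simp only at hxy
      rw [← hxy] at hpos
      omega
  · -- copy x has weight exactly 1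
    obtain ⟨b0, hb0pos⟩ : ∃ b, 0 < f (x, b) := exists_pos_of_copyW_pos (by omega)
    classical
    have hrest : ∀ b, b ≠ b0 → f (x, b) = 0 := by
      intro b hb
      have hsplit : f (x, b0) + ∑ c ∈ Finset.univ.erase b0, f (x, c) = copyW f x :=
        Finset.add_sum_erase _ (fun c => f (x, c)) (Finset.mem_univ b0)
      have hz : ∑ c ∈ Finset.univ.erase b0, f (x, c) = 0 := by omega
      have := (Finset.sum_eq_zero_iff).mp hz b (by simp [hb])
      exact this
    refine no_universal h2 b0 fun b hb => ?_
    obtain ⟨⟨y, c⟩, hadj, hpos⟩ := hdom (x, b) (hrest b hb)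
    rcases hadj with hg | ⟨hxy, hH'⟩
    · have := hc y hg
      have := apply_le_copyW f y c
      omega
    · simp only at hxy hH'
      have hc0 : c = b0 := by
        by_contra hne
        rw [← hxy] at hpos
        have := hrest c hne
        omega
      rw [hc0] at hH'
      exact hH'

end Product

end SecureW


namespace SecureW

open Finset

section Part1

variable {α β : Type*} [Fintype α] [Fintype β] {G : SimpleGraph α} {H : SimpleGraph β}

lemma cap_le_two (f : α × β → ℕ) (v : α) : cap f v ≤ 2 := Nat.min_le_left _ _

lemma cap_isWDom (hH : Nontrivial β) (h2 : domNum H = 2) {f : α × β → ℕ}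
    (hf : IsWDom (lexProd G H) [1, 0] f) : IsWDom G [1, 1, 0] (cap f) := by
  apply isWDom110_intro _ (cap_le_two f)
  intro x hx
  have hx' : copyW f x ≤ 1 := by unfold cap at hx; omega
  obtain ⟨y, hadj, hpos⟩ := key_neighbor hH h2 hf hx'
  exact ⟨y, hadj, by unfold cap; omega⟩

lemma cap_secure (hH : Nontrivial β) (h2 : domNum H = 2) {f : α × β → ℕ}
    (hf : IsSecureWDom (lexProd G H) [1, 0] f) : IsSecureWDom G [1, 1, 0] (cap f) := by
  classical
  obtain ⟨hdom, hsec⟩ := hf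
  refine ⟨cap_isWDom hH h2 hdom, fun v hv => ?_⟩
  have hcw : copyW f v = 0 := by unfold cap at hv; omega
  obtain ⟨b⟩ := hH.to_nonempty
  have hz : f (v, b) = 0 := by have := apply_le_copyW f v b; omega
  obtain ⟨⟨u, c⟩, hadj, hpos, hdom'0⟩ := hsec (v, b) hz
  have hdom' : IsWDom (lexProd G H) [1, 0] (move f (u, c) (v, b)) := isWDom_move_irrel hdom'0
  clear hdom'0
  have huv : u ≠ v := by
    rintro rfl
    have := apply_le_copyW f u c
    omega
  have hGadj : G.Adj v u := by
    rcases hadj with h | ⟨h1, _⟩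
    · exact h
    · exact absurd h1.symm huv
  have hcapu : 0 < cap f u := by
    unfold cap
    have := apply_le_copyW f u c
    omega
  refine ⟨u, hGadj, hcapu, ?_⟩
  set f' := move f (u, c) (v, b) with hf'def
  have hfv' : ∀ y, f' (v, y) = if y = b then 1 else 0 := by
    intro y
    have hz' : f (v, y) = 0 := by have := apply_le_copyW f v y; omega
    by_cases hyb : y = b
    · simp [hf'def, move, hyb]
    · simp [hf'def, move, hyb, Prod.ext_iff, Ne.symm huv, hz']
  have hcv' : copyW f' v = 1 := by
    unfold copyW
    rw [Finset.sum_congr rfl fun y _ => hfv' y]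
    simp
  have hfu' : ∀ y, f' (u, y) = if y = c then f (u, c) - 1 else f (u, y) := by
    intro y
    by_cases hyc : y = c
    · simp [hf'def, move, hyc, Prod.ext_iff, huv]
    · simp [hf'def, move, hyc, Prod.ext_iff, huv]
  have hcu' : copyW f' u + 1 = copyW f u := by
    unfold copyW
    rw [Finset.sum_congr rfl fun y _ => hfu' y]
    rw [← Finset.add_sum_erase _ (fun y => if y = c then f (u, c) - 1 else f (u, y))
      (Finset.mem_univ c), ← Finset.add_sum_erase _ (fun y => f (u, y)) (Finset.mem_univ c)]
    have he : ∑ y ∈ Finset.univ.erase c, (if y = c then f (u, c) - 1 else f (u, y))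
        = ∑ y ∈ Finset.univ.erase c, f (u, y) := by
      refine Finset.sum_congr rfl fun y hy => ?_
      rw [if_neg (Finset.mem_erase.mp hy).1]
    rw [he, if_pos rfl]
    omega
  have hfx' : ∀ x, x ≠ v → x ≠ u → ∀ y, f' (x, y) = f (x, y) := by
    intro x h1 h2' y
    simp [hf'def, move, Prod.ext_iff, h1, h2']
  have hcx' : ∀ x, x ≠ v → x ≠ u → copyW f' x = copyW f x := by
    intro x h1 h2'
    exact Finset.sum_congr rfl fun y _ => hfx' x h1 h2' y
  set mg := move (cap f) u v with hmgdef
  have hmgv : mg v = 1 := by simp [hmgdef, move]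
  have hmgu : mg u = cap f u - 1 := by simp [hmgdef, move, huv]
  have hmgx : ∀ x, x ≠ v → x ≠ u → mg x = cap f x := by
    intro x h1 h2'
    simp [hmgdef, move, h1, h2']
  have htrans : ∀ y, 0 < copyW f' y → 0 < mg y := by
    intro y hy
    by_cases h1 : y = v
    · rw [h1, hmgv]; omega
    by_cases h2' : y = u
    · subst h2'
      rw [hmgu]
      unfold cap
      omega
    · rw [hmgx y h1 h2']
      rw [hcx' y h1 h2'] at hy
      unfold cap
      omega
  apply isWDom110_intro
  · intro x
    by_cases h1 : x = v
    · rw [h1, hmgv]; omega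
    by_cases h2' : x = u
    · rw [h2', hmgu]; have := cap_le_two f u; omega
    · rw [hmgx x h1 h2']; exact cap_le_two f x
  · intro x hx
    by_cases hxu : x = u
    · subst hxu
      exact ⟨v, hGadj.symm, by rw [hmgv]; omega⟩
    · have hcle : copyW f' x ≤ 1 := by
        by_cases hxv : x = v
        · rw [hxv, hcv']
        · rw [hcx' x hxv hxu]
          rw [hmgx x hxv hxu] at hx
          unfold cap at hx
          omega
      obtain ⟨y, hadj', hpos'⟩ := key_neighbor hH h2 hdom' hcle
      exact ⟨y, hadj', htrans y hpos'⟩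

lemma part1 (hH : Nontrivial β) (h2 : domNum H = 2) :
    secWDomNum G [1, 1, 0] ≤ secWDomNum (lexProd G H) [1, 0] := by
  have hconst : IsSecureWDom (lexProd G H) [1, 0] (fun _ => 1) := by
    refine ⟨(isWDom10_iff _).mpr ⟨fun _ => le_refl 1, fun v hv => absurd hv one_ne_zero⟩,
      fun v hv => absurd hv one_ne_zero⟩
  have hne : {k | ∃ f, IsSecureWDom (lexProd G H) [1, 0] f ∧ weight f = k}.Nonempty :=
    ⟨weight (fun _ : α × β => 1), (fun _ => 1), hconst, rfl⟩
  obtain ⟨f, hf, hw⟩ := Nat.sInf_mem hne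
  calc secWDomNum G [1, 1, 0] ≤ weight (cap f) :=
        Nat.sInf_le ⟨cap f, cap_secure hH h2 hf, rfl⟩
    _ ≤ weight f := by
        rw [weight_eq_sum_copyW]
        exact Finset.sum_le_sum fun v _ => Nat.min_le_right _ _
    _ = secWDomNum (lexProd G H) [1, 0] := hw

end Part1

end SecureW


namespace SecureW

open Finset

section Part2

variable {α β : Type*} [Fintype α] [Fintype β] {G : SimpleGraph α} {H : SimpleGraph β}

lemma part2 (hH : Nontrivial β) (h1 : secWDomNum H [1, 0] = 2) :
    secWDomNum (lexProd G H) [1, 0] ≤ wDomNum G [2, 2, 0] := by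
  classical
  -- obtain an optimal (2,2,0)-dominating function g on G
  have hconst2 : IsWDom G [2, 2, 0] (fun _ : α => 2) :=
    ⟨fun v => by simp, fun v => by rw [getD220]; simp⟩
  have hgne : {k | ∃ f, IsWDom G [2, 2, 0] f ∧ weight f = k}.Nonempty :=
    ⟨weight (fun _ : α => 2), (fun _ => 2), hconst2, rfl⟩
  obtain ⟨g, hg, hgw⟩ := Nat.sInf_mem hgne
  -- obtain a secure dominating function on H of weight 2
  have hconstH : IsSecureWDom H [1, 0] (fun _ : β => 1) :=
    ⟨(isWDom10_iff _).mpr ⟨fun _ => le_refl 1, fun v hv => absurd hv one_ne_zero⟩,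
      fun v hv => absurd hv one_ne_zero⟩
  have hHne : {k | ∃ f, IsSecureWDom H [1, 0] f ∧ weight f = k}.Nonempty :=
    ⟨weight (fun _ : β => 1), (fun _ => 1), hconstH, rfl⟩
  obtain ⟨fH, hfH, hfHw⟩ := Nat.sInf_mem hHne
  have hfHw2 : weight fH = 2 := hfHw.trans h1
  obtain ⟨hfHdom, hfHsec⟩ := hfH
  obtain ⟨hfHle, hfHdom0⟩ := (isWDom10_iff fH).mp hfHdom
  -- extract the two-vertex support of fH
  have hScard : (Finset.univ.filter (fun b => fH b = 1)).card = 2 := by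
    have hc : (Finset.univ.filter (fun b => fH b = 1)).card
        = ∑ b, (if fH b = 1 then 1 else 0) := Finset.card_filter _ _
    have hs : ∀ b, (if fH b = 1 then 1 else 0) = fH b := by
      intro b
      have := hfHle b
      split <;> omega
    rw [hc, Finset.sum_congr rfl fun b _ => hs b]
    exact hfHw2
  obtain ⟨b1, b2, hb12, hS⟩ := Finset.card_eq_two.mp hScard
  have hfb1 : fH b1 = 1 := by
    have : b1 ∈ Finset.univ.filter (fun b => fH b = 1) := by
      rw [hS]; exact Finset.mem_insert_self _ _
    simpa using this
  have hfb2 : fH b2 = 1 := by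
    have : b2 ∈ Finset.univ.filter (fun b => fH b = 1) := by
      rw [hS]; simp
    simpa using this
  have hfother : ∀ b, b ≠ b1 → b ≠ b2 → fH b = 0 := by
    intro b hn1 hn2
    by_contra hn
    have h1' : fH b = 1 := by have := hfHle b; omega
    have : b ∈ Finset.univ.filter (fun b => fH b = 1) := by simp [h1']
    rw [hS] at this
    simp [hn1, hn2] at this
  -- facts about g
  have hgle : ∀ v, g v ≤ 2 := fun v => by have := hg.1 v; simpa using Nat.lt_succ_iff.mp this
  have hgreq : ∀ v, g v ≤ 1 → 2 ≤ nbrSum G g v := by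
    intro v hv
    have := hg.2 v
    rwa [getD220, if_pos hv] at this
  have E1 : ∀ v, g v ≤ 1 → ∃ u, G.Adj v u ∧ 0 < g u := by
    intro v hv
    exact exists_of_nbrSum_pos (by have := hgreq v hv; omega)
  have E2 : ∀ v u0, g v ≤ 1 →
      (∃ u, G.Adj v u ∧ u ≠ u0 ∧ 0 < g u) ∨ (G.Adj v u0 ∧ g u0 = 2) := by
    intro v u0 hv
    by_cases hcase : ∃ u, G.Adj v u ∧ u ≠ u0 ∧ 0 < g u
    · exact Or.inl hcase
    · push_neg at hcase
      have hcon := nbrSum_concentrate u0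
        (fun u hu hne => by have := hcase u hu hne; omega) (hgreq v hv)
      exact Or.inr ⟨hcon.1, by have := hgle u0; omega⟩
  -- the function F on the product
  set F : α × β → ℕ := fun p =>
    if g p.1 = 0 then 0 else if g p.1 = 1 then (if p.2 = b1 then 1 else 0) else fH p.2
    with hFdef
  have hFle : ∀ p, F p ≤ 1 := by
    intro p
    simp only [hFdef]
    split_ifs <;> first | omega | exact hfHle _
  have hFP : ∀ u, 0 < g u → 0 < F (u, b1) := by
    intro u hu
    have he : F (u, b1) = if g u = 0 then 0 else if g u = 1 then 1 else fH b1 := by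
      simp [hFdef]
    rw [he, hfb1]
    split_ifs <;> omega
  have hFg2 : ∀ v b, g v = 2 → F (v, b) = fH b := by
    intro v b hv
    simp [hFdef, hv]
  have hFb2pos : ∀ u, g u = 2 → 0 < F (u, b2) := by
    intro u hu
    rw [hFg2 u b2 hu, hfb2]
    omega
  -- weight of F equals weight of g
  have hwF : weight F = weight g := by
    rw [weight_eq_sum_copyW]
    unfold weight
    refine Finset.sum_congr rfl fun v _ => ?_
    have h3 : g v = 0 ∨ g v = 1 ∨ g v = 2 := by have := hgle v; omega
    rcases h3 with hv | hv | hv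
    · unfold copyW
      rw [hv]
      exact Finset.sum_eq_zero fun b _ => by simp [hFdef, hv]
    · unfold copyW
      rw [hv]
      have : ∀ b, F (v, b) = if b = b1 then 1 else 0 := fun b => by simp [hFdef, hv]
      rw [Finset.sum_congr rfl fun b _ => this b]
      simp
    · unfold copyW
      rw [hv]
      rw [Finset.sum_congr rfl fun b _ => hFg2 v b hv]
      exact hfHw2
  -- F is a dominating function on the product
  have hFdom : IsWDom (lexProd G H) [1, 0] F := by
    refine (isWDom10_iff F).mpr ⟨hFle, ?_⟩
    rintro ⟨v, b⟩ hz
    by_cases hgv2 : g v = 2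
    · have hfz : fH b = 0 := by rw [hFg2 v b hgv2] at hz; exact hz
      obtain ⟨c, hc, hcpos⟩ := hfHdom0 b hfz
      exact ⟨(v, c), Or.inr ⟨rfl, hc⟩, by rw [hFg2 v c hgv2]; exact hcpos⟩
    · have hgv : g v ≤ 1 := by have := hgle v; omega
      obtain ⟨u, hu, hupos⟩ := E1 v hgv
      exact ⟨(u, b1), Or.inl hu, hFP u hupos⟩
  -- F is secure
  have hFsec : ∀ p, F p = 0 → ∃ q, (lexProd G H).Adj p q ∧ 0 < F q ∧
      IsWDom (lexProd G H) [1, 0] (move F q p) := by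
    rintro ⟨v, b⟩ hz
    by_cases hgv2 : g v = 2
    · -- move within the copy, using security of fH
      have hfz : fH b = 0 := by rw [hFg2 v b hgv2] at hz; exact hz
      obtain ⟨c, hcadj, hcpos, hcdom0⟩ := hfHsec b hfz
      have hcdom : IsWDom H [1, 0] (move fH c b) := isWDom_move_irrel hcdom0
      obtain ⟨hcle, hcd⟩ := (isWDom10_iff _).mp hcdom
      refine ⟨(v, c), Or.inr ⟨rfl, hcadj⟩, by rw [hFg2 v c hgv2]; exact hcpos, ?_⟩
      have hkey : ∀ y, move F (v, c) (v, b) (v, y) = move fH c b y := by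
        intro y
        unfold move
        by_cases hyb : y = b
        · rw [if_pos (by rw [hyb]), if_pos hyb]
        · rw [if_neg (by simp [hyb]), if_neg hyb]
          by_cases hyc : y = c
          · rw [if_pos (by rw [hyc]), if_pos hyc, hFg2 v c hgv2]
          · rw [if_neg (by simp [hyc]), if_neg hyc, hFg2 v y hgv2]
      have hFup : ∀ x y, x ≠ v → move F (v, c) (v, b) (x, y) = F (x, y) := by
        intro x y hx
        unfold move
        rw [if_neg (by simp [hx]), if_neg (by simp [hx])]
      refine (isWDom10_iff _).mpr ⟨move_le hFle _ _, ?_⟩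
      rintro ⟨x, y⟩ hz'
      by_cases hxv : x = v
      · subst hxv
        rw [hkey y] at hz'
        obtain ⟨c2, hc2, hc2pos⟩ := hcd y hz'
        exact ⟨(x, c2), Or.inr ⟨rfl, hc2⟩, by rw [hkey c2]; exact hc2pos⟩
      · rw [hFup x y hxv] at hz'
        by_cases hgx2 : g x = 2
        · have hfy : fH y = 0 := by rw [hFg2 x y hgx2] at hz'; exact hz'
          obtain ⟨c2, hc2, hc2pos⟩ := hfHdom0 y hfy
          refine ⟨(x, c2), Or.inr ⟨rfl, hc2⟩, ?_⟩
          rw [hFup x c2 hxv, hFg2 x c2 hgx2]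
          exact hc2pos
        · have hgx : g x ≤ 1 := by have := hgle x; omega
          obtain ⟨u, hu, hupos⟩ := E1 x hgx
          by_cases huv : u = v
          · subst huv
            refine ⟨(u, b), Or.inl hu, ?_⟩
            unfold move
            rw [if_pos rfl]
            omega
          · refine ⟨(u, b1), Or.inl hu, ?_⟩
            rw [hFup u b1 huv]
            exact hFP u hupos
    · -- move from a neighbouring copy
      have hgv : g v ≤ 1 := by have := hgle v; omega
      obtain ⟨u, hu, hupos⟩ := E1 v hgv
      have huv : u ≠ v := hu.ne'
      refine ⟨(u, b1), Or.inl hu, hFP u hupos, ?_⟩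
      have hF2vb : move F (u, b1) (v, b) (v, b) = 1 := by
        unfold move
        rw [if_pos rfl]
      have hF2 : ∀ p, p ≠ ((v : α), (b : β)) → p ≠ (u, b1) → move F (u, b1) (v, b) p = F p := by
        intro p h1' h2'
        unfold move
        rw [if_neg h1', if_neg h2']
      refine (isWDom10_iff _).mpr ⟨move_le hFle _ _, ?_⟩
      rintro ⟨x, y⟩ hz'
      by_cases hxu : x = u
      · subst hxu
        refine ⟨(v, b), Or.inl hu.symm, ?_⟩
        rw [hF2vb]
        omega
      by_cases hxv : x = v
      · subst hxv
        rcases E2 x u hgv with ⟨u2, hu2, hne2, hpos2⟩ | ⟨_, hgu2⟩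
        · have hu2v : u2 ≠ x := hu2.ne'
          refine ⟨(u2, b1), Or.inl hu2, ?_⟩
          rw [hF2 (u2, b1) (by simp [hu2v]) (by simp [hne2])]
          exact hFP u2 hpos2
        · refine ⟨(u, b2), Or.inl hu, ?_⟩
          rw [hF2 (u, b2) (by simp [huv]) (by simp [hb12.symm])]
          exact hFb2pos u hgu2
      · have hz'' : F (x, y) = 0 := by
          rw [hF2 (x, y) (by simp [hxv]) (by simp [hxu])] at hz'
          exact hz'
        by_cases hgx2 : g x = 2
        · have hfy : fH y = 0 := by rw [hFg2 x y hgx2] at hz''; exact hz''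
          obtain ⟨c2, hc2, hc2pos⟩ := hfHdom0 y hfy
          refine ⟨(x, c2), Or.inr ⟨rfl, hc2⟩, ?_⟩
          rw [hF2 (x, c2) (by simp [hxv]) (by simp [hxu]), hFg2 x c2 hgx2]
          exact hc2pos
        · have hgx : g x ≤ 1 := by have := hgle x; omega
          rcases E2 x u hgx with ⟨u3, hu3, hne3, hpos3⟩ | ⟨hadj3, hgu2⟩
          · by_cases hu3v : u3 = v
            · refine ⟨(v, b), Or.inl (hu3v ▸ hu3), ?_⟩
              rw [hF2vb]
              omega
            · refine ⟨(u3, b1), Or.inl hu3, ?_⟩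
              rw [hF2 (u3, b1) (by simp [hu3v]) (by simp [hne3])]
              exact hFP u3 hpos3
          · refine ⟨(u, b2), Or.inl hadj3, ?_⟩
            rw [hF2 (u, b2) (by simp [huv]) (by simp [hb12.symm])]
            exact hFb2pos u hgu2
  have hFsec' : IsSecureWDom (lexProd G H) [1, 0] F := by
    refine ⟨hFdom, fun p hp => ?_⟩
    obtain ⟨q, hadj, hpos, hdom⟩ := hFsec p hp
    exact ⟨q, hadj, hpos, isWDom_move_irrel hdom⟩
  calc secWDomNum (lexProd G H) [1, 0] ≤ weight F := Nat.sInf_le ⟨F, hFsec', rfl⟩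
    _ = weight g := hwF
    _ = wDomNum G [2, 2, 0] := hgw

end Part2

end SecureW

open SecureW in
theorem stmt_4 {α β : Type*} [Fintype α] [Fintype β]
    (G : SimpleGraph α) (H : SimpleGraph β)
    (hG : NoIsolated G) (hH : Nontrivial β)
    (h1 : secWDomNum H [1, 0] = 2) (h2 : domNum H = 2) :
    secWDomNum G [1, 1, 0] ≤ secWDomNum (lexProd G H) [1, 0] ∧
      secWDomNum (lexProd G H) [1, 0] ≤ wDomNum G [2, 2, 0] :=
  ⟨part1 (G := G) (H := H) hH h2, part2 (G := G) (H := H) hH h1⟩
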